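/- Let (i_k)_{k∈ℕ} be a sequence of elements of I and i ∈ I. If ⋂_k α(i_k) = α(i), then there exists a natural number n such that i_0 ⊓ i_1 ⊓ ... ⊓ i_n = i. -/

import Mathlib

open Set Topology Filter Polynomial

noncomputable section

/-- A point of the plaque inverse limit of the iterations of `f`:
a sequence `x : ℕ → ℂ` with `f (x (n+1)) = x n` for all `n`. -/
structure PIL (f : ℂ → ℂ) where
  seq : ℕ → ℂ
  compat : ∀ n, f (seq (n + 1)) = seq n

/-- `c` is a critical point of `f`: a zero of the derivative of `f`. -/
def IsCriticalPt (f : ℂ → ℂ) (c : ℂ) : Prop := deriv f c = 0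

/-- `U` is the pullback sequence of the open, connected, simply connected set `U 0`
along the point `x` of the plaque inverse limit:  `U (n+1)` is the connected
component of `f ⁻¹' (U n)` containing `x.seq (n+1)`. -/
def IsPullbackSeq (f : ℂ → ℂ) (x : PIL f) (U : ℕ → Set ℂ) : Prop :=
  IsOpen (U 0) ∧ IsConnected (U 0) ∧ SimplyConnectedSpace (U 0) ∧ x.seq 0 ∈ U 0 ∧
    ∀ n, U (n + 1) = connectedComponentIn (f ⁻¹' U n) (x.seq (n + 1))

/-- The basic neighborhood `Û` associated to a pullback sequence `U`. -/
def basicNbhd (f : ℂ → ℂ) (U : ℕ → Set ℂ) : Set (PIL f) :=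
  {y : PIL f | ∀ n, y.seq n ∈ U n}

/-- The plaque topology on the plaque inverse limit: generated by all basic
neighborhoods of all points. -/
instance plaqueTopology (f : ℂ → ℂ) : TopologicalSpace (PIL f) :=
  TopologicalSpace.generateFrom
    {V | ∃ (x : PIL f) (U : ℕ → Set ℂ), IsPullbackSeq f x U ∧ V = basicNbhd f U}

/-- A point `x` of the plaque inverse limit is regular if along some pullback
sequence the levels eventually contain no critical point of `f`. -/
def RegularPt (f : ℂ → ℂ) (x : PIL f) : Prop :=
  ∃ U, IsPullbackSeq f x U ∧ ∃ N, ∀ n ≥ N, ∀ c, IsCriticalPt f c → c ∉ U n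

/-- The Boolean algebra `I` of binary sequences modulo eventual equality. -/
abbrev BinGerm := Filter.Germ (Filter.atTop : Filter ℕ) Bool

/-- `α(a) = {b ∈ I | b ≤ a}`. -/
def alphaSet (a : BinGerm) : Set BinGerm := {b | b ≤ a}

/-- The least element `𝟎` of `I`: the class of the constant-`0` sequence. -/
def binZero : BinGerm := (↑(fun _ : ℕ => false) : BinGerm)

/-- `ind(U,c) ∈ I`: the class of the binary sequence whose `n`-th entry is `1`
exactly when `c ∈ U n`. -/
def indClass (U : ℕ → Set ℂ) (c : ℂ) : BinGerm :=
  (↑(fun n => @decide (c ∈ U n) (Classical.propDecidable _)) : BinGerm)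

/-- `Useq` is a sequence of pullback sequences along `x` whose basic neighborhoods
form a decreasing neighborhood basis at `x` in the plaque topology. -/
def IsShrinkingBasisAt (f : ℂ → ℂ) (x : PIL f) (Useq : ℕ → ℕ → Set ℂ) : Prop :=
  (∀ j, IsPullbackSeq f x (Useq j)) ∧
  (∀ j, basicNbhd f (Useq (j + 1)) ⊆ basicNbhd f (Useq j)) ∧
  (∀ S : Set (PIL f), S ∈ nhds x → ∃ j, basicNbhd f (Useq j) ⊆ S)

/-- The signature `sign(x,c) ⊆ I`:  `⋂_j α(ind(U(j),c))` for a sequence of pullback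
sequences along `x` whose basic neighborhoods form a decreasing neighborhood basis
at `x` (the intersection is independent of this choice). -/
def signature (f : ℂ → ℂ) (x : PIL f) (c : ℂ) : Set BinGerm :=
  ⋃ (Useq : ℕ → ℕ → Set ℂ) (_ : IsShrinkingBasisAt f x Useq),
    ⋂ j, alphaSet (indClass (Useq j) c)

/-- `S ⊆ I` has a maximal element. -/
def HasMaxElem (S : Set BinGerm) : Prop := ∃ a ∈ S, ∀ b ∈ S, b ≤ a

/-- The set of path components of a subset `V` of a topological space. -/
def pathComponentsIn {X : Type*} [TopologicalSpace X] (V : Set X) : Set (Set X) :=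
  {P | ∃ y ∈ V, P = {z | z ∈ V ∧ JoinedIn V y z}}

/-- `x` is the invariant lift of a super-attracting, attracting or parabolic cycle:
`x` is periodic of some period `p ≥ 1` and the multiplier `λ = (f^[p])'(x 0)`
satisfies `|λ| < 1` or `λ ^ k = 1` for some `k ≥ 1`. -/
def IsCycleLift (f : ℂ → ℂ) (x : PIL f) : Prop :=
  ∃ p, 1 ≤ p ∧ (∀ n, x.seq (n + p) = x.seq n) ∧
    (‖deriv (f^[p]) (x.seq 0)‖ < 1 ∨
      ∃ k, 1 ≤ k ∧ (deriv (f^[p]) (x.seq 0)) ^ k = 1)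

/-- The basin of attraction of the fixed point `x₀`. -/
def basinOf (f : ℂ → ℂ) (x₀ : ℂ) : Set ℂ :=
  {z | Tendsto (fun n => f^[n] z) atTop (nhds x₀)}

/-- The immediate basin of attraction of the fixed point `x₀`: the union of the
connected components of the interior of the basin whose closure contains `x₀`. -/
def immediateBasin (f : ℂ → ℂ) (x₀ : ℂ) : Set ℂ :=
  ⋃ (z : ℂ) (_ : z ∈ interior (basinOf f x₀))
    (_ : x₀ ∈ closure (connectedComponentIn (interior (basinOf f x₀)) z)),
    connectedComponentIn (interior (basinOf f x₀)) z

/-- `i(q)`: the number of indices `i` with `n i ≤ q` (for a strictly monotone `n`). -/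
def countLE (n : ℕ → ℕ) (q : ℕ) : ℕ :=
  ((Finset.range (q + 1)).filter (fun i => n i ≤ q)).card

/-- The map `f̂ : T∞ → T∞` induced by `f`. -/
def fhat (f : ℂ → ℂ) (x : PIL f) : PIL f :=
  ⟨fun n => f (x.seq n), fun n => congrArg f (x.compat n)⟩

/-- `shift₋ₘ : I → I`, deleting the first `m` entries of a binary sequence. -/
def shiftMinus (m : ℕ) (a : BinGerm) : BinGerm :=
  a.compTendsto (fun n => n + m) (tendsto_add_atTop_nat m)

/-!
The partial meets `b n = i₀ ⊓ ⋯ ⊓ iₙ` decrease and stay above `i`. If none of them equals `i`,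
choose increasing positions `k₀ < k₁ < ⋯` such that at `kₙ` the entry of `bₙ` exceeds that of `i`
and does not exceed that of any `bₘ`, `m ≤ n`. Raising `i` to `bₙ` at each `kₙ` gives a germ
strictly above `i` but below every `bₙ`, hence below every `iₖ`: a lower bound not in `α(i)`.
-/

namespace Filter.Germ

theorem exists_lt_forall_le_of_antitone {β : Type*} [Preorder β]
    {b : ℕ → Germ (atTop : Filter ℕ) β} (hb : Antitone b) {i : Germ (atTop : Filter ℕ) β}
    (hi : ∀ n, i < b n) : ∃ g, i < g ∧ ∀ n, g ≤ b n := by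
  choose F hF using fun n => inductionOn (b n) (p := fun c => ∃ f : ℕ → β, ↑f = c)
    fun f => ⟨f, rfl⟩
  obtain rfl : b = fun n => (F n : Germ atTop β) := funext fun n => (hF n).symm
  induction i using inductionOn with | _ G => ?_
  simp only [lt_iff_le_not_ge, coe_le] at hi
  have hF_anti : ∀ m n, m ≤ n → F n ≤ᶠ[atTop] F m := fun m n hmn => coe_le.1 (hb hmn)
  have hfreq : ∀ n, ∃ᶠ k in atTop,
      ¬F n k ≤ G k ∧ G k ≤ F n k ∧ ∀ m ∈ Set.Iic n, F n k ≤ F m k := fun n =>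
    (not_eventually.1 (hi n).2).and_eventually ((hi n).1.and
      ((eventually_all_finite (Set.finite_Iic n)).2 fun m hm => hF_anti m n hm))
  obtain ⟨φ, hφ, hφP⟩ := extraction_forall_of_frequently hfreq
  -- `g` is `G` except at the points `φ n`, where it takes the value of `F n`.
  set g : ℕ → β := Function.extend φ (fun n => F n (φ n)) G
  have hg_range : ∀ n, g (φ n) = F n (φ n) := fun n => hφ.injective.extend_apply _ _ n
  have hg_of_notMem_range : ∀ k, k ∉ Set.range φ → g k = G k := fun k hk => Function.extend_apply' _ _ _ hk
  have hGg : G ≤ g := by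
    intro k
    by_cases hk : k ∈ Set.range φ
    · obtain ⟨n, rfl⟩ := hk
      exact (hg_range n).symm ▸ (hφP n).2.1
    · exact (hg_of_notMem_range k hk).symm ▸ le_rfl
  refine ⟨g, ⟨coe_le.2 (Eventually.of_forall hGg), fun hgG => ?_⟩, fun m => coe_le.2 ?_⟩
  · obtain ⟨k, hkG⟩ := eventually_atTop.1 (coe_le.1 hgG)
    exact (hφP k).1 (hg_range k ▸ hkG (φ k) (hφ.id_le k))
  · filter_upwards [(hi m).1, eventually_gt_atTop (φ m)] with k hGk hk
    by_cases hkφ : k ∈ Set.range φ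
    · obtain ⟨n, rfl⟩ := hkφ
      exact (hg_range n).symm ▸ (hφP n).2.2 m (hφ.lt_iff_lt.1 hk).le
    · exact (hg_of_notMem_range k hkφ).symm ▸ hGk

end Filter.Germ

theorem stmt7 (iseq : ℕ → BinGerm) (i : BinGerm)
    (h : (⋂ k, alphaSet (iseq k)) = alphaSet i) :
    ∃ n : ℕ, (Finset.range (n + 1)).inf' (by simp) iseq = i := by
  set b : ℕ → BinGerm := fun n => (Finset.range (n + 1)).inf' (by simp) iseq
  have hb_anti : Antitone b := fun m n hmn =>
    Finset.inf'_mono _ (Finset.range_subset_range.2 (Nat.succ_le_succ hmn)) _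
  have hb_le : ∀ k, b k ≤ iseq k := fun k => Finset.inf'_le _ (Finset.self_mem_range_succ k)
  have hi_le : ∀ n, i ≤ b n := fun n =>
    Finset.le_inf' _ _ fun k _ => Set.mem_iInter.1 (h ▸ le_refl i : i ∈ ⋂ k, alphaSet (iseq k)) k
  by_contra! hb_ne
  obtain ⟨g, hig, hgb⟩ :=
    Filter.Germ.exists_lt_forall_le_of_antitone hb_anti fun n => (hi_le n).lt_of_ne (hb_ne n).symm
  have hg : g ∈ alphaSet i := h ▸ Set.mem_iInter.2 fun k => (hgb k).trans (hb_le k)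
  exact hig.not_ge hg

end
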